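/- Predicative embedding of rewriting: Let R be a POE*-compatible TRS and ℓ the maximal size of right-hand sides of R. If s ∈ T_n and s →_R t (call-by-value rewriting), then Q(s) ▷_ℓ Q(t), where Q is the predicative interpretation. -/

import Mathlib

/-- Terms over signature `F` and variables `V`, with the argument positions of
each function symbol separated into normal (`nrm`) and safe (`saf`) ones. -/
inductive Tm (F V : Type) where
  | var : V → Tm F V
  | app : F → List (Tm F V) → List (Tm F V) → Tm F V

namespace Tm

/-- Values: terms built from constructors (symbols in `C`) only; constructors
have only safe argument positions. -/
inductive IsVal {F V : Type} (C : Set F) : Tm F V → Prop where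
  | app {f ss} : f ∈ C → (∀ t ∈ ss, IsVal C t) → IsVal C (Tm.app f [] ss)

/-- Constructor terms: terms built from constructors and variables only. -/
inductive IsConTm {F V : Type} (C : Set F) : Tm F V → Prop where
  | var (v : V) : IsConTm C (Tm.var v)
  | app {f ss} : f ∈ C → (∀ t ∈ ss, IsConTm C t) → IsConTm C (Tm.app f [] ss)

/-- Application of a substitution to a term. -/
def subst {F V : Type} (σ : V → Tm F V) : Tm F V → Tm F V
  | Tm.var v => σ v
  | Tm.app f ns ss => Tm.app f (ns.attach.map fun t => subst σ t.1)
                               (ss.attach.map fun t => subst σ t.1)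
  decreasing_by
    · have := List.sizeOf_lt_of_mem t.2; simp; omega
    · have := List.sizeOf_lt_of_mem t.2; simp; omega

/-- The size of a term: the number of symbols occurring in it. -/
def size {F V : Type} : Tm F V → ℕ
  | Tm.var _ => 1
  | Tm.app _ ns ss => 1 + ((ns.attach.map fun t => size t.1).sum
                            + (ss.attach.map fun t => size t.1).sum)
  decreasing_by
    · have := List.sizeOf_lt_of_mem t.2; simp; omega
    · have := List.sizeOf_lt_of_mem t.2; simp; omega

/-- `SubEq s t` : `t` is a (not necessarily proper) subterm of `s`. -/
inductive SubEq {F V : Type} : Tm F V → Tm F V → Prop where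
  | refl (t) : SubEq t t
  | nrm {f ns ss s t} : s ∈ ns → SubEq s t → SubEq (Tm.app f ns ss) t
  | saf {f ns ss s t} : s ∈ ss → SubEq s t → SubEq (Tm.app f ns ss) t

/-- `NSub s t` : `t` is a subterm of a normal argument of `s`
(the relation written `s ⊳ⁿ t`). -/
def NSub {F V : Type} (s t : Tm F V) : Prop :=
  ∃ f ns ss, s = Tm.app f ns ss ∧ ∃ u ∈ ns, SubEq u t

/-- Call-by-value rewriting for a set of rules `R`: root steps instantiate a
rule with a substitution mapping variables to values, and rewriting is closed
under contexts. -/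
inductive Rew {F V : Type} (C : Set F) (R : Set (Tm F V × Tm F V)) : Tm F V → Tm F V → Prop where
  | root {l r : Tm F V} (σ : V → Tm F V) :
      (l, r) ∈ R → (∀ v, IsVal C (σ v)) → Rew C R (subst σ l) (subst σ r)
  | ctxtN {s t f ns₁ ns₂ ss} : Rew C R s t →
      Rew C R (Tm.app f (ns₁ ++ s :: ns₂) ss) (Tm.app f (ns₁ ++ t :: ns₂) ss)
  | ctxtS {s t f ns ss₁ ss₂} : Rew C R s t →
      Rew C R (Tm.app f ns (ss₁ ++ s :: ss₂)) (Tm.app f ns (ss₁ ++ t :: ss₂))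

mutual
  /-- The POE* order `⊐` induced by a precedence `prec` and constructors `C`
  (Definition of `poe`); symbols not in `C` are the defined symbols. -/
  inductive Poe {F V : Type} (prec : F → F → Prop) (C : Set F) : Tm F V → Tm F V → Prop where
    /- clause (1), `sᵢ = t`: `t` is one of the (normal or safe) arguments -/
    | sub {f ns ss t} : t ∈ ns ++ ss → Poe prec C (Tm.app f ns ss) t
    /- clause (1), `sᵢ ⊐ t` for an argument `sᵢ` -/
    | subtrans {f ns ss u t} : u ∈ ns ++ ss → Poe prec C u t → Poe prec C (Tm.app f ns ss) t
    /- clause (2): precedence descent; normal arguments of `t` are subterms of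
       normal arguments of `s`, and `s ⊐` every safe argument of `t` -/
    | ia {f g : F} {ns ss tn ts} : f ∉ C → prec f g →
        (∀ t' ∈ tn, NSub (Tm.app f ns ss) t') →
        (∀ t' ∈ ts, Poe prec C (Tm.app f ns ss) t') →
        Poe prec C (Tm.app f ns ss) (Tm.app g tn ts)
    /- clause (3): same defined root symbol, product descent on normal
       arguments, `s ⊐` every safe argument of `t` -/
    | tsc {f : F} {ns ss tn ts} : f ∉ C →
        PoeProd prec C ns tn →
        (∀ t' ∈ ts, Poe prec C (Tm.app f ns ss) t') →
        Poe prec C (Tm.app f ns ss) (Tm.app f tn ts)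

  /-- Product extension of `⊐`: componentwise equal-or-smaller with at least
  one strict decrease. -/
  inductive PoeProd {F V : Type} (prec : F → F → Prop) (C : Set F) :
      List (Tm F V) → List (Tm F V) → Prop where
    | strict {a b as bs} : Poe prec C a b → PoeGE prec C as bs →
        PoeProd prec C (a :: as) (b :: bs)
    | cons_eq {a as bs} : PoeProd prec C as bs → PoeProd prec C (a :: as) (a :: bs)
    | cons_lt {a b as bs} : Poe prec C a b → PoeProd prec C as bs →
        PoeProd prec C (a :: as) (b :: bs)

  /-- Componentwise equal-or-smaller (w.r.t. `⊐`) lists of equal length. -/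
  inductive PoeGE {F V : Type} (prec : F → F → Prop) (C : Set F) :
      List (Tm F V) → List (Tm F V) → Prop where
    | nil : PoeGE prec C [] []
    | cons_eq {a as bs} : PoeGE prec C as bs → PoeGE prec C (a :: as) (a :: bs)
    | cons_lt {a b as bs} : Poe prec C a b → PoeGE prec C as bs →
        PoeGE prec C (a :: as) (b :: bs)
end

/-- `R` is compatible with the POE* order induced by `prec`, and is a
constructor TRS: every left-hand side has a defined root symbol and its
arguments are constructor terms. -/
def PoeCompatible {F V : Type} (prec : F → F → Prop) (C : Set F)
    (R : Set (Tm F V × Tm F V)) : Prop :=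
  ∀ p ∈ R, Poe prec C p.1 p.2 ∧
    ∃ f ns ss, p.1 = Tm.app f ns ss ∧ f ∉ C ∧ ∀ t ∈ ns ++ ss, IsConTm C t

/-- `TN`: the set of terms whose normal argument positions hold values. -/
inductive TN {F V : Type} (C : Set F) : Tm F V → Prop where
  | val {t} : IsVal C t → TN C t
  | app {f ns ss} : (∀ v ∈ ns, IsVal C v) → (∀ t ∈ ss, TN C t) →
      TN C (Tm.app f ns ss)

end Tm

namespace Tm

/-- `SSub s t` : `t` is a strict subterm of `s`. -/
inductive SSub {F V : Type} : Tm F V → Tm F V → Prop where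
  | nrm {f ns ss u t} : u ∈ ns → SubEq u t → SSub (Tm.app f ns ss) t
  | saf {f ns ss u t} : u ∈ ss → SubEq u t → SSub (Tm.app f ns ss) t

/-- Elements compared by the auxiliary order `▷_ℓ`: normalised terms (inl) or
sequences of normalised terms (inr).  The normalised term `fⁿ(s₁,…,s_k)` is
represented as `f` applied to normal arguments `s₁,…,s_k` and no safe
arguments; the lifted precedence `fⁿ ≻' gⁿ ⇔ f ≻ g` is then `prec` itself. -/
abbrev TS (F V : Type) := Tm F V ⊕ List (Tm F V)

/-- Identification of a term with the singleton sequence. -/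
def toL {F V : Type} : TS F V → List (Tm F V) := Sum.elim (fun t => [t]) id

mutual
  /-- The auxiliary order `▷_ℓ` on (normalised) terms and sequences, induced
  by a precedence `prec` and the width bound `ℓ`. -/
  inductive Poel {F V : Type} (prec : F → F → Prop) (ℓ : ℕ) : TS F V → TS F V → Prop where
    /- clause (1): precedence descent to strict subterms, width at most ℓ -/
    | ia {f g : F} {ss ts : List (Tm F V)} :
        prec f g → (∀ t ∈ ts, SSub (Tm.app f ss []) t) → ts.length ≤ ℓ →
        Poel prec ℓ (Sum.inl (Tm.app f ss [])) (Sum.inl (Tm.app g ts []))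
    /- clause (2): same symbol, product extension of the strict-subterm order -/
    | tsc {f : F} {ss ts : List (Tm F V)} :
        List.Forall₂ (fun s t => s = t ∨ SSub s t) ss ts →
        (∃ i, ∃ (h₁ : i < ss.length) (h₂ : i < ts.length), SSub ss[i] ts[i]) →
        Poel prec ℓ (Sum.inl (Tm.app f ss [])) (Sum.inl (Tm.app f ts []))
    /- clause (3): descent from a term to a sequence of at most ℓ smaller terms -/
    | ialst {f : F} {ss ts : List (Tm F V)} :
        (∀ t ∈ ts, Poel prec ℓ (Sum.inl (Tm.app f ss [])) (Sum.inl t)) → ts.length ≤ ℓ →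
        Poel prec ℓ (Sum.inl (Tm.app f ss [])) (Sum.inr ts)
    /- clause (4): sequences, splitting `ts = b₁ ++ ⋯ ++ b_k` with
       `⟨s₁,…,s_k⟩` greater than `⟨b₁,…,b_k⟩` in the product extension of `▷_ℓ` -/
    | ms {ss ts : List (Tm F V)} (bs : List (TS F V)) :
        ts = (bs.map toL).flatten →
        PoelProd prec ℓ (ss.map Sum.inl) bs →
        Poel prec ℓ (Sum.inr ss) (Sum.inr ts)

  /-- Product extension of `▷_ℓ`: componentwise equal-or-smaller with at
  least one strict decrease. -/
  inductive PoelProd {F V : Type} (prec : F → F → Prop) (ℓ : ℕ) :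
      List (TS F V) → List (TS F V) → Prop where
    | strict {a b as bs} : Poel prec ℓ a b → PoelGE prec ℓ as bs →
        PoelProd prec ℓ (a :: as) (b :: bs)
    | cons_eq {a as bs} : PoelProd prec ℓ as bs → PoelProd prec ℓ (a :: as) (a :: bs)
    | cons_lt {a b as bs} : Poel prec ℓ a b → PoelProd prec ℓ as bs →
        PoelProd prec ℓ (a :: as) (b :: bs)

  /-- Componentwise equal-or-smaller (w.r.t. `▷_ℓ`) lists of equal length. -/
  inductive PoelGE {F V : Type} (prec : F → F → Prop) (ℓ : ℕ) :
      List (TS F V) → List (TS F V) → Prop where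
    | nil : PoelGE prec ℓ [] []
    | cons_eq {a as bs} : PoelGE prec ℓ as bs → PoelGE prec ℓ (a :: as) (a :: bs)
    | cons_lt {a b as bs} : Poel prec ℓ a b → PoelGE prec ℓ as bs →
        PoelGE prec ℓ (a :: as) (b :: bs)
end

mutual
  /-- The predicative interpretation `Q` (as a functional relation):
  a value is mapped to the empty sequence, and a non-value
  `f(s₁,…,s_k; s_{k+1},…,s_{k+l})` to `[fⁿ(s₁,…,s_k)] ++ Q(s_{k+1}) ++ ⋯ ++ Q(s_{k+l})`. -/
  inductive QRel {F V : Type} (C : Set F) : Tm F V → List (Tm F V) → Prop where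
    | val {t} : IsVal C t → QRel C t []
    | app {f ns ss qs} : ¬ IsVal C (Tm.app f ns ss) → QList C ss qs →
        QRel C (Tm.app f ns ss) (Tm.app f ns [] :: qs.flatten)

  /-- `Q` applied pointwise to a list of terms. -/
  inductive QList {F V : Type} (C : Set F) : List (Tm F V) → List (List (Tm F V)) → Prop where
    | nil : QList C [] []
    | cons {t q ts qs} : QRel C t q → QList C ts qs → QList C (t :: ts) (q :: qs)
end

end Tm

/-!
At the root, a left-hand side `l = f(n⃗; s⃗)` has constructor-term arguments, so for a
value substitution `σ` we get `Q(lσ) = [fⁿ(n⃗σ)]`. Every element of `Q(rσ)` lies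
`▷_ℓ`-below `fⁿ(n⃗σ)`: follow the derivation of `l ⊐ r`; precedence descent gives
clause (1) of `▷_ℓ`, and product descent gives clause (2) because on constructor terms
`⊐` is the strict subterm relation, which survives substitution. There are at most
`|r| ≤ ℓ` such elements. Below the root, `s ∈ T_n` rules out steps in normal arguments
(values are normal forms), and a step in a safe argument replaces one contiguous block
of `Q(s)`, so it is handled by the induction hypothesis and the compatibility of `▷_ℓ`
with concatenation.
-/

namespace Tm

variable {F V : Type} {C : Set F} {prec : F → F → Prop} {ℓ : ℕ} {σ : V → Tm F V}

theorem subst_app (σ : V → Tm F V) (f : F) (ns ss : List (Tm F V)) :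
    subst σ (Tm.app f ns ss) = Tm.app f (ns.map (subst σ)) (ss.map (subst σ)) := by
  rw [subst]; simp

theorem size_app (f : F) (ns ss : List (Tm F V)) :
    size (Tm.app f ns ss) = 1 + ((ns.map size).sum + (ss.map size).sum) := by
  rw [size]; simp

theorem one_le_size (t : Tm F V) : 1 ≤ size t := by
  cases t with
  | var v => rw [size]
  | app f ns ss => rw [size_app]; omega

theorem length_le_sum_map_size (l : List (Tm F V)) : l.length ≤ (l.map size).sum := by
  induction l with
  | nil => simp
  | cons a as ih =>
    simp only [List.length_cons, List.map_cons, List.sum_cons]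
    have := one_le_size a
    omega

theorem size_lt_size_app {t : Tm F V} {f ns ss} (h : t ∈ ns ++ ss) :
    size t < size (Tm.app f ns ss) := by
  rw [size_app]
  rcases List.mem_append.1 h with h | h <;>
  · have := List.le_sum_of_mem (List.mem_map_of_mem (f := size) h); omega

theorem subEq_subst {a b : Tm F V} (h : SubEq a b) : SubEq (subst σ a) (subst σ b) := by
  induction h with
  | refl t => exact .refl _
  | nrm hm _ ih => rw [subst_app]; exact .nrm (List.mem_map_of_mem hm) ih
  | saf hm _ ih => rw [subst_app]; exact .saf (List.mem_map_of_mem hm) ih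

theorem SSub.subEq {a b : Tm F V} (h : SSub a b) : SubEq a b := by
  cases h with
  | nrm hm h => exact .nrm hm h
  | saf hm h => exact .saf hm h

theorem sSub_subst {a b : Tm F V} (h : SSub a b) : SSub (subst σ a) (subst σ b) := by
  cases h with
  | nrm hm h => rw [subst_app]; exact .nrm (List.mem_map_of_mem hm) (subEq_subst h)
  | saf hm h => rw [subst_app]; exact .saf (List.mem_map_of_mem hm) (subEq_subst h)

theorem IsConTm.of_subEq {a b : Tm F V} (ha : IsConTm C a) (h : SubEq a b) : IsConTm C b := by
  induction h with
  | refl t => exact ha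
  | nrm hm _ _ => cases ha; simp at hm
  | saf hm _ ih => cases ha with | app _ h => exact ih (h _ hm)

theorem IsConTm.isVal_subst {a : Tm F V} (ha : IsConTm C a) (hσ : ∀ v, IsVal C (σ v)) :
    IsVal C (subst σ a) := by
  induction ha with
  | var v => rw [subst]; exact hσ v
  | app hf _ ih =>
    rw [subst_app]
    refine IsVal.app hf ?_
    simp only [List.mem_map]
    rintro _ ⟨u, hu, rfl⟩
    exact ih u hu

theorem IsConTm.sSub_of_poe {a b : Tm F V} (ha : IsConTm C a) (h : Poe prec C a b) :
    SSub a b := by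
  induction ha generalizing b with
  | var v => cases h
  | app hc _ ih =>
    cases h with
    | sub hm => exact .saf (by rwa [List.nil_append] at hm) (.refl _)
    | subtrans hm hu =>
      rw [List.nil_append] at hm
      exact .saf hm (ih _ hm hu).subEq
    | ia hf => exact absurd hc hf
    | tsc hf => exact absurd hc hf

theorem IsConTm.sSub_subst_of_poe {a b : Tm F V} (ha : IsConTm C a) (h : Poe prec C a b) :
    SSub (subst σ a) (subst σ b) :=
  sSub_subst (ha.sSub_of_poe h)

theorem PoeProd.poeGE {as bs : List (Tm F V)} (h : PoeProd prec C as bs) :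
    PoeGE prec C as bs := by
  induction as generalizing bs with
  | nil => cases h
  | cons a as ih =>
    cases h with
    | strict hp h => exact .cons_lt hp h
    | cons_eq h => exact .cons_eq (ih h)
    | cons_lt hp h => exact .cons_lt hp (ih h)

theorem PoeGE.forall₂_subst {as bs : List (Tm F V)} (h : PoeGE prec C as bs)
    (hcon : ∀ a ∈ as, IsConTm C a) :
    List.Forall₂ (fun x y => x = y ∨ SSub x y) (as.map (subst σ)) (bs.map (subst σ)) := by
  induction as generalizing bs with
  | nil => cases h; simp
  | cons a as ih =>
    rw [List.forall_mem_cons] at hcon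
    cases h with
    | cons_eq h => exact .cons (.inl rfl) (ih h hcon.2)
    | cons_lt hp h => exact .cons (.inr (hcon.1.sSub_subst_of_poe hp)) (ih h hcon.2)

theorem PoeProd.exists_sSub_subst {as bs : List (Tm F V)} (h : PoeProd prec C as bs)
    (hcon : ∀ a ∈ as, IsConTm C a) :
    ∃ i, ∃ (h₁ : i < (as.map (subst σ)).length) (h₂ : i < (bs.map (subst σ)).length),
      SSub (as.map (subst σ))[i] (bs.map (subst σ))[i] := by
  induction as generalizing bs with
  | nil => cases h
  | cons a as ih =>
    rw [List.forall_mem_cons] at hcon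
    cases h with
    | strict hp _ | cons_lt hp _ => exact ⟨0, by simp, by simp, hcon.1.sSub_subst_of_poe hp⟩
    | cons_eq h =>
      obtain ⟨i, h₁, h₂, hi⟩ := ih h hcon.2
      exact ⟨i + 1, by simpa using h₁, by simpa using h₂, by simpa using hi⟩

theorem IsVal.head_mem {f : F} {ns ss : List (Tm F V)} (h : IsVal C (Tm.app f ns ss)) :
    f ∈ C := by
  cases h; assumption

theorem IsVal.nrm_eq_nil {f : F} {ns ss : List (Tm F V)} (h : IsVal C (Tm.app f ns ss)) :
    ns = [] := by
  cases h; rfl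

theorem Rew.not_isVal {R : Set (Tm F V × Tm F V)}
    (hR : ∀ p ∈ R, ∃ f ns ss, p.1 = Tm.app f ns ss ∧ f ∉ C) {s t : Tm F V}
    (h : Rew C R s t) : ¬ IsVal C s := by
  induction h with
  | @root l r σ hlr _ =>
    obtain ⟨f, ns, ss, hl : l = _, hf⟩ := hR _ hlr
    rw [hl, subst_app]
    exact fun hv => hf hv.head_mem
  | ctxtN _ _ => intro hv; simpa using hv.nrm_eq_nil
  | ctxtS _ ih => rintro ⟨_, h⟩; exact ih (h _ (by simp))

theorem TN.isVal_of_mem_nrm {f : F} {ns ss : List (Tm F V)} {t : Tm F V}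
    (h : TN C (Tm.app f ns ss)) (ht : t ∈ ns) : IsVal C t := by
  cases h with
  | val hv => cases hv; simp at ht
  | app h _ => exact h t ht

theorem TN.of_mem_saf {f : F} {ns ss : List (Tm F V)} {t : Tm F V}
    (h : TN C (Tm.app f ns ss)) (ht : t ∈ ss) : TN C t := by
  cases h with
  | val hv => cases hv with | app _ h => exact .val (h t ht)
  | app _ h => exact h t ht

theorem QRel.eq_nil_of_isVal {t : Tm F V} {q} (h : QRel C t q) (hv : IsVal C t) : q = [] := by
  cases h with
  | val _ => rfl
  | app hnv _ => exact absurd hv hnv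

theorem QList.flatten_eq_nil {ts : List (Tm F V)} {qs} (h : QList C ts qs)
    (hv : ∀ t ∈ ts, IsVal C t) : qs.flatten = [] := by
  induction ts generalizing qs with
  | nil => cases h; rfl
  | cons t ts ih =>
    rw [List.forall_mem_cons] at hv
    cases h with
    | cons hq h => rw [List.flatten_cons, hq.eq_nil_of_isVal hv.1, ih h hv.2, List.nil_append]

theorem QList.of_append {ts us : List (Tm F V)} {qs} (h : QList C (ts ++ us) qs) :
    ∃ q₁ q₂, qs = q₁ ++ q₂ ∧ QList C ts q₁ ∧ QList C us q₂ := by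
  induction ts generalizing qs with
  | nil => exact ⟨[], qs, rfl, .nil, h⟩
  | cons t ts ih =>
    cases h with
    | cons hq h =>
      obtain ⟨q₁, q₂, rfl, h₁, h₂⟩ := ih h
      exact ⟨_ :: q₁, q₂, rfl, .cons hq h₁, h₂⟩

theorem QList.exists_of_mem_flatten {ts : List (Tm F V)} {qs} (h : QList C ts qs) {x}
    (hx : x ∈ qs.flatten) : ∃ t ∈ ts, ∃ q, QRel C t q ∧ x ∈ q := by
  induction ts generalizing qs with
  | nil => cases h; simp at hx
  | cons t ts ih =>
    cases h with
    | cons hq h =>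
      rcases List.mem_append.1 (List.flatten_cons ▸ hx) with hx | hx
      · exact ⟨t, List.mem_cons_self, _, hq, hx⟩
      · obtain ⟨u, hu, q, hq, hx⟩ := ih h hx
        exact ⟨u, List.mem_cons_of_mem _ hu, q, hq, hx⟩

theorem QRel.mem_app_cases {f : F} {ns ss : List (Tm F V)} {q x}
    (h : QRel C (Tm.app f ns ss) q) (hx : x ∈ q) :
    x = Tm.app f ns [] ∨ ∃ u ∈ ss, ∃ qu, QRel C u qu ∧ x ∈ qu := by
  cases h with
  | val _ => simp at hx
  | app _ hq =>
    rcases List.mem_cons.1 hx with rfl | hx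
    · exact .inl rfl
    · exact .inr (hq.exists_of_mem_flatten hx)

theorem QRel.exists_eq_app_nil {t : Tm F V} {q} (h : QRel C t q) {x} (hx : x ∈ q) :
    ∃ f ns, x = Tm.app f ns [] := by
  match t with
  | .var _ => cases h with | val _ => simp at hx
  | .app f ns ss =>
    rcases h.mem_app_cases hx with rfl | ⟨u, hu, qu, hqu, hxu⟩
    · exact ⟨f, ns, rfl⟩
    · exact hqu.exists_eq_app_nil hxu
termination_by size t
decreasing_by exact size_lt_size_app (List.mem_append_right _ hu)

mutual

theorem QRel.unique {t : Tm F V} {q q'} (h : QRel C t q) (h' : QRel C t q') : q = q' := by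
  cases h with
  | val hv => exact (h'.eq_nil_of_isVal hv).symm
  | app hnv hq =>
    cases h' with
    | val hv => exact absurd hv hnv
    | app _ hq' => rw [hq.unique hq']
termination_by sizeOf t

theorem QList.unique {ts : List (Tm F V)} {qs qs'} (h : QList C ts qs) (h' : QList C ts qs') :
    qs = qs' := by
  cases h with
  | nil => cases h'; rfl
  | cons hq h =>
    cases h' with
    | cons hq' h' => rw [hq.unique hq', h.unique h']
termination_by sizeOf ts

end

mutual

theorem QRel.length_le_size (hσ : ∀ v, IsVal C (σ v)) {u : Tm F V} {q}
    (h : QRel C (subst σ u) q) : q.length ≤ size u := by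
  cases u with
  | var v => rw [h.eq_nil_of_isVal (by rw [subst]; exact hσ v)]; exact Nat.zero_le _
  | app f ns ss =>
    rw [subst_app] at h
    rw [size_app]
    cases h with
    | val _ => exact Nat.zero_le _
    | app _ hq =>
      have := QList.length_flatten_le hσ hq
      rw [List.length_cons]
      omega
termination_by sizeOf u

theorem QList.length_flatten_le (hσ : ∀ v, IsVal C (σ v)) {us : List (Tm F V)} {qs}
    (h : QList C (us.map (subst σ)) qs) : qs.flatten.length ≤ (us.map size).sum := by
  cases us with
  | nil => cases h; simp
  | cons u us =>
    cases h with
    | cons hq h =>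
      have := QRel.length_le_size hσ hq
      have := QList.length_flatten_le hσ h
      simp only [List.flatten_cons, List.length_append, List.map_cons, List.sum_cons]
      omega
termination_by sizeOf us

end

theorem PoelGE.refl (l : List (TS F V)) : PoelGE prec ℓ l l := by
  induction l with
  | nil => exact .nil
  | cons a as ih => exact .cons_eq ih

theorem PoelGE.append_right {as bs : List (TS F V)} (h : PoelGE prec ℓ as bs)
    (cs : List (TS F V)) : PoelGE prec ℓ (as ++ cs) (bs ++ cs) := by
  induction as generalizing bs with
  | nil => cases h; exact .refl cs
  | cons a as ih =>
    cases h with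
    | cons_eq h => exact .cons_eq (ih h)
    | cons_lt hp h => exact .cons_lt hp (ih h)

theorem PoelGE.replicate_of_forall {as : List (TS F V)} {b : TS F V}
    (h : ∀ a ∈ as, Poel prec ℓ a b) : PoelGE prec ℓ as (List.replicate as.length b) := by
  induction as with
  | nil => exact .nil
  | cons a as ih =>
    rw [List.forall_mem_cons] at h
    exact .cons_lt h.1 (ih h.2)

theorem PoelProd.append_right {as bs : List (TS F V)} (h : PoelProd prec ℓ as bs)
    (cs : List (TS F V)) : PoelProd prec ℓ (as ++ cs) (bs ++ cs) := by
  induction as generalizing bs with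
  | nil => cases h
  | cons a as ih =>
    cases h with
    | strict hp h => exact .strict hp (h.append_right cs)
    | cons_eq h => exact .cons_eq (ih h)
    | cons_lt hp h => exact .cons_lt hp (ih h)

theorem PoelProd.append_left (cs : List (TS F V)) {as bs : List (TS F V)}
    (h : PoelProd prec ℓ as bs) : PoelProd prec ℓ (cs ++ as) (cs ++ bs) := by
  induction cs with
  | nil => exact h
  | cons c cs ih => exact .cons_eq ih

@[simp] theorem flatten_map_toL_inl (l : List (Tm F V)) :
    (l.map (toL ∘ Sum.inl : Tm F V → List (Tm F V))).flatten = l := by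
  induction l with
  | nil => rfl
  | cons a as ih => simpa [toL] using ih

theorem Poel.inr_append {as bs : List (Tm F V)} (h : Poel prec ℓ (.inr as) (.inr bs))
    (cs ds : List (Tm F V)) : Poel prec ℓ (.inr (cs ++ as ++ ds)) (.inr (cs ++ bs ++ ds)) := by
  obtain ⟨bl, rfl, hprod⟩ :
      ∃ bl, bs = (bl.map toL).flatten ∧ PoelProd prec ℓ (as.map Sum.inl) bl := by
    cases h with | ms bl h₁ h₂ => exact ⟨bl, h₁, h₂⟩
  refine .ms (cs.map .inl ++ bl ++ ds.map .inl) (by simp) ?_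
  simpa using (hprod.append_right _).append_left _

theorem Poel.inr_nil {qs : List (Tm F V)} (hne : qs ≠ [])
    (hnrm : ∀ x ∈ qs, ∃ f ns, x = Tm.app f ns []) : Poel prec ℓ (.inr qs) (.inr []) := by
  have hlt : ∀ x ∈ qs, Poel prec ℓ (.inl x) (.inr []) := by
    intro x hx
    obtain ⟨f, ns, rfl⟩ := hnrm x hx
    exact .ialst (by simp) (by simp)
  obtain ⟨a, as, rfl⟩ := List.exists_cons_of_ne_nil hne
  rw [List.forall_mem_cons] at hlt
  refine .ms (List.replicate (as.length + 1) (.inr [])) (by simp [toL]) ?_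
  refine .strict hlt.1 ?_
  simpa using PoelGE.replicate_of_forall (as := as.map Sum.inl) (by simpa using hlt.2)

theorem Poe.poel_of_mem_qRel_subst {f : F} {ns ss : List (Tm F V)} (hcon : ∀ t ∈ ns ++ ss, IsConTm C t)
    (hσ : ∀ v, IsVal C (σ v)) {u : Tm F V} (hpoe : Poe prec C (Tm.app f ns ss) u)
    (hu : size u ≤ ℓ) {q x} (hq : QRel C (subst σ u) q) (hx : x ∈ q) :
    Poel prec ℓ (.inl (Tm.app f (ns.map (subst σ)) [])) (.inl x) := by
  -- In the two subterm cases `u` is a constructor term, so `uσ` is a value and `Q(uσ) = []`.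
  cases hpoe with
  | sub hm => simp [hq.eq_nil_of_isVal ((hcon _ hm).isVal_subst hσ)] at hx
  | subtrans hm hpoe =>
    have hcu := (hcon _ hm).of_subEq ((hcon _ hm).sSub_of_poe hpoe).subEq
    simp [hq.eq_nil_of_isVal (hcu.isVal_subst hσ)] at hx
  | @ia _ g _ _ tn ts _ hprec hnsub hts =>
    rw [subst_app] at hq
    rcases hq.mem_app_cases hx with rfl | ⟨_, hw, qw, hqw, hxw⟩
    · refine .ia hprec ?_ ?_
      · simp only [List.mem_map]
        rintro _ ⟨w, hw, rfl⟩
        obtain ⟨_, _, _, ⟨⟩, a, ha, haw⟩ := hnsub w hw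
        exact .nrm (List.mem_map_of_mem ha) (subEq_subst haw)
      · have := length_le_sum_map_size tn
        rw [size_app] at hu
        rw [List.length_map]
        omega
    · obtain ⟨w, hwts, rfl⟩ := List.mem_map.1 hw
      have hlt : size w < size (Tm.app g tn ts) := size_lt_size_app (List.mem_append_right tn hwts)
      exact (hts w hwts).poel_of_mem_qRel_subst hcon hσ (by omega) hqw hxw
  | @tsc _ _ _ tn ts _ hprod hts =>
    rw [subst_app] at hq
    rcases hq.mem_app_cases hx with rfl | ⟨_, hw, qw, hqw, hxw⟩
    · have hcon' := fun a ha => hcon a (List.mem_append_left ss ha)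
      exact .tsc (hprod.poeGE.forall₂_subst hcon') (hprod.exists_sSub_subst hcon')
    · obtain ⟨w, hwts, rfl⟩ := List.mem_map.1 hw
      have hlt : size w < size (Tm.app f tn ts) := size_lt_size_app (List.mem_append_right tn hwts)
      exact (hts w hwts).poel_of_mem_qRel_subst hcon hσ (by omega) hqw hxw
termination_by size u
decreasing_by all_goals subst_vars; exact hlt

theorem poel_root_step {R : Set (Tm F V × Tm F V)} (hcompat : PoeCompatible prec C R)
    {l r : Tm F V} (hlr : (l, r) ∈ R) (hr : size r ≤ ℓ) (hσ : ∀ v, IsVal C (σ v))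
    {qs qt : List (Tm F V)} (hqs : QRel C (subst σ l) qs) (hqt : QRel C (subst σ r) qt) :
    Poel prec ℓ (.inr qs) (.inr qt) := by
  obtain ⟨hpoe, f, ns, ss, hl : l = _, hf, hcon⟩ := hcompat _ hlr
  subst hl
  rw [subst_app] at hqs
  obtain rfl : qs = [Tm.app f (ns.map (subst σ)) []] := by
    cases hqs with
    | val hv => exact absurd hv.head_mem hf
    | app _ hq =>
      rw [hq.flatten_eq_nil]
      simp only [List.mem_map]
      rintro _ ⟨u, hu, rfl⟩
      exact (hcon u (List.mem_append_right ns hu)).isVal_subst hσ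
  refine .ms [.inr qt] (by simp [toL]) (.strict (.ialst ?_ ?_) .nil)
  · exact fun x hx => hpoe.poel_of_mem_qRel_subst hcon hσ hr hqt hx
  · exact (hqt.length_le_size hσ).trans hr

theorem poel_saf_step {f : F} {ns ss₁ ss₂ : List (Tm F V)} {u u' : Tm F V} {qs qt}
    (hnv : ¬ IsVal C (Tm.app f ns (ss₁ ++ u :: ss₂)))
    (hqs : QRel C (Tm.app f ns (ss₁ ++ u :: ss₂)) qs)
    (hqt : QRel C (Tm.app f ns (ss₁ ++ u' :: ss₂)) qt)
    (ih : ∀ {qu qu'}, QRel C u qu → QRel C u' qu' → Poel prec ℓ (.inr qu) (.inr qu')) :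
    Poel prec ℓ (.inr qs) (.inr qt) := by
  have hnrm := fun x (hx : x ∈ qs) => hqs.exists_eq_app_nil hx
  cases hqs with
  | val hv => exact absurd hv hnv
  | app _ hq =>
    obtain ⟨q₁, _, rfl, hq₁, hq⟩ := hq.of_append
    cases hq with | cons hqu hq₂ =>
    cases hqt with
    -- The step may turn a non-value into a value, whose interpretation is empty.
    | val _ => exact .inr_nil (List.cons_ne_nil _ _) hnrm
    | app _ hp =>
      obtain ⟨p₁, _, rfl, hp₁, hp⟩ := hp.of_append
      cases hp with | cons hpu hp₂ =>
      obtain rfl := hq₁.unique hp₁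
      obtain rfl := hq₂.unique hp₂
      simpa using (ih hqu hpu).inr_append (Tm.app f ns [] :: q₁.flatten) _

end Tm

open Tm in
/-- Predicative embedding of rewriting: for a POE*-compatible TRS `R` and `ℓ`
(a bound on) the maximal size of right-hand sides of `R`, if `s ∈ T_n` and
`s →_R t` then `Q(s) ▷_ℓ Q(t)`. -/
theorem predicative_embedding {F V : Type} (C : Set F) (prec : F → F → Prop)
    (R : Set (Tm F V × Tm F V)) (hcompat : PoeCompatible prec C R)
    (ℓ : ℕ) (hℓ : ∀ p ∈ R, size p.2 ≤ ℓ)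
    {s t : Tm F V} (hs : TN C s) (hst : Rew C R s t)
    {qs qt : List (Tm F V)} (hqs : QRel C s qs) (hqt : QRel C t qt) :
    Poel prec ℓ (Sum.inr qs) (Sum.inr qt) := by
  have hdef : ∀ p ∈ R, ∃ f ns ss, p.1 = Tm.app f ns ss ∧ f ∉ C := fun p hp =>
    let ⟨_, f, ns, ss, hl, hf, _⟩ := hcompat p hp
    ⟨f, ns, ss, hl, hf⟩
  induction hst generalizing qs qt with
  | root σ hlr hσ => exact poel_root_step hcompat hlr (hℓ _ hlr) hσ hqs hqt
  | ctxtN hrew _ => exact absurd (hs.isVal_of_mem_nrm (by simp)) (hrew.not_isVal hdef)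
  | ctxtS hrew ih =>
    exact poel_saf_step ((Rew.ctxtS hrew).not_isVal hdef) hqs hqt
      (ih (hs.of_mem_saf (by simp)))
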